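/- arXiv:1310.5202 — 2 statements merged into one kernel-verified Lean document; each statement's English description precedes it below -/
import Mathlib

section
/- Let S be a finite set with |S| = n ≥ 2. Then for all hierarchies 𝒜, ℬ over S (degenerate or not), the crossing dissimilarity satisfies d_CM(𝒜,ℬ) ≤ (n−2)², and there exists a pair of nondegenerate hierarchies 𝒜, ℬ over S with d_CM(𝒜,ℬ) = (n−2)². That is, the diameter of the set of hierarchies over S in the crossing dissimilarity equals (n−2)². -/
open scoped Classical

namespace TreeDist

variable {α : Type*} [DecidableEq α]

/-- Two finite sets are compatible if they are disjoint or nested. -/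
def Compatible (A B : Finset α) : Prop :=
  A ∩ B = ∅ ∨ A ⊆ B ∨ B ⊆ A

/-- A hierarchy over `S`: a laminar family of nonempty subsets of `S`
containing `S` and all singletons. -/
def IsHierarchy (S : Finset α) (F : Finset (Finset α)) : Prop :=
  (∀ A ∈ F, A ⊆ S ∧ A.Nonempty) ∧
  (∀ A ∈ F, ∀ B ∈ F, Compatible A B) ∧
  S ∈ F ∧ ∀ i ∈ S, ({i} : Finset α) ∈ F

/-- A nondegenerate (binary) hierarchy: a hierarchy with `2|S| - 1` clusters,
equivalently a maximal laminar family. -/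
def Nondeg (S : Finset α) (F : Finset (Finset α)) : Prop :=
  IsHierarchy S F ∧ F.card = 2 * S.card - 1

/-- `P` is the parent of `I` in the family `F`: the smallest cluster of `F`
strictly containing `I`. -/
def IsParent (F : Finset (Finset α)) (I P : Finset α) : Prop :=
  P ∈ F ∧ I ⊂ P ∧ ∀ Q ∈ F, I ⊂ Q → P ⊆ Q

/-- `G` is the result of an NNI move on `F` at some grandchild `C`:
`G = (F \ {parent C}) ∪ {grandparent C \ C}`. -/
def IsNNIMove (F G : Finset (Finset α)) : Prop :=
  ∃ C P GP, C ∈ F ∧ IsParent F C P ∧ IsParent F P GP ∧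
    G = insert (GP \ C) (F.erase P)

/-- Restriction of a family of sets to `K`: `{A ∩ K : A ∈ F, A ∩ K ≠ ∅}`. -/
noncomputable def restrictFam (F : Finset (Finset α)) (K : Finset α) : Finset (Finset α) :=
  (F.image (· ∩ K)).filter fun A => A.Nonempty

/-- The cardinality of the smallest common ancestor of `i` and `j` in `F`, i.e. the
minimum cardinality of a cluster of `F` containing both `i` and `j`. -/
noncomputable def caCard (F : Finset (Finset α)) (i j : α) : ℕ :=
  sInf {n | ∃ A ∈ F, i ∈ A ∧ j ∈ A ∧ A.card = n}

/-- Ultrametric representation `U(F)_{ij} = |ca(i,j)| - 1`. -/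
noncomputable def Umat (F : Finset (Finset α)) (i j : α) : ℤ :=
  (caCard F i j : ℤ) - 1

/-- Cluster-cardinality distance `d_CC = (1/2) Σ_{i,j ∈ S} |U(F)_{ij} - U(G)_{ij}|`. -/
noncomputable def dCC (S : Finset α) (F G : Finset (Finset α)) : ℚ :=
  (1 / 2) * ∑ i ∈ S, ∑ j ∈ S, |((Umat F i j : ℚ)) - ((Umat G i j : ℚ))|

/-- Robinson–Foulds distance: half the size of the symmetric difference of cluster sets. -/
noncomputable def dRF (F G : Finset (Finset α)) : ℚ :=
  (((F \ G) ∪ (G \ F)).card : ℚ) / 2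

/-- Crossing dissimilarity: the number of incompatible pairs of clusters. -/
noncomputable def dCM (F G : Finset (Finset α)) : ℕ :=
  ((F ×ˢ G).filter fun p => ¬ Compatible p.1 p.2).card

/-- Depth of a cluster: the number of its strict ancestors in `F`. -/
noncomputable def depth (F : Finset (Finset α)) (I : Finset α) : ℕ :=
  (F.filter fun J => I ⊂ J).card

/-- The children of `I` in `F`: the clusters of `F` whose parent is `I`. -/
noncomputable def children (F : Finset (Finset α)) (I : Finset α) : Finset (Finset α) :=
  F.filter fun C => IsParent F C I

/-- `η_{F,G}(I,J)`: the number of members of `(children I)|_J` incompatible with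
the family `(children J)|_I`. -/
noncomputable def eta (F G : Finset (Finset α)) (I J : Finset α) : ℕ :=
  ((restrictFam (children F I) J).filter
    fun A => ∃ B ∈ restrictFam (children G J) I, ¬ Compatible A B).card

/-- `θ(x) = (x² + x)/2`. -/
def theta (x : ℕ) : ℚ := ((x : ℚ) ^ 2 + x) / 2

/-- Closed-form NNI navigation distance `d_Nav(F,G) = Σ_{I∈F, J∈G} θ(η_{F,G}(I,J))`. -/
noncomputable def dNav (F G : Finset (Finset α)) : ℚ :=
  ∑ I ∈ F, ∑ J ∈ G, theta (eta F G I J)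


/-!
Upper bound: an incompatible pair consists of two nontrivial clusters (at least two points,
not all of `S`), and a hierarchy has at most `n - 2` of them. To count them, rank the points
injectively; every cluster `I` with `|I| ≥ 2` is the least cluster containing some point `x`
together with a point of smaller rank (take for `x` the lowest-ranked point outside the child
of `I` that holds the lowest-ranked point of `I`), so `I ↦ x` injects these clusters into `S`
minus its lowest-ranked point.

Lower bound: for an enumeration `e` of `S`, take the caterpillars with clusters the prefixes
`{e 0, …, e a}` and `{e 0, e (-1), …, e (-b)}` (indices mod `n`). For `0 < a, b < n - 1` the two
prefixes share `e 0`, only the first contains `e 1` and only the second contains `e (-1)`.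
-/

open Finset Function

lemma Compatible.symm {A B : Finset α} (h : Compatible A B) : Compatible B A := by
  unfold Compatible at h ⊢
  rw [inter_comm]
  tauto

lemma compatible_singleton_left (x : α) (B : Finset α) : Compatible {x} B := by
  by_cases hx : x ∈ B
  · exact Or.inr (Or.inl (singleton_subset_iff.mpr hx))
  · exact Or.inl (singleton_inter_of_notMem hx)

lemma not_compatible_of_mem {A B : Finset α} {x y z : α} (hxA : x ∈ A) (hxB : x ∈ B)
    (hyA : y ∈ A) (hyB : y ∉ B) (hzA : z ∉ A) (hzB : z ∈ B) : ¬ Compatible A B := by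
  rintro (h | h | h)
  · simpa [h] using mem_inter.mpr ⟨hxA, hxB⟩
  · exact hyB (h hyA)
  · exact hzA (h hzB)

section UpperBound

variable {S : Finset α} {F G : Finset (Finset α)}

noncomputable def nontrivialClusters (S : Finset α) (F : Finset (Finset α)) :
    Finset (Finset α) :=
  F.filter fun I => 2 ≤ I.card ∧ I ≠ S

structure IsLeastClusterWithLower {β : Type*} [LinearOrder β] (F : Finset (Finset α))
    (r : α → β) (x : α) (I : Finset α) : Prop where
  mem : x ∈ I
  exists_lt : ∃ y ∈ I, r y < r x
  subset_of_mem : ∀ J ∈ F, x ∈ J → (∃ y ∈ J, r y < r x) → I ⊆ J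

lemma IsHierarchy.exists_isLeastClusterAbove {β : Type*} [LinearOrder β] (hF : IsHierarchy S F)
    {r : α → β} (hr : Injective r) {I : Finset α} (hI : I ∈ F) (hI2 : 2 ≤ I.card) :
    ∃ x, IsLeastClusterWithLower F r x I := by
  obtain ⟨hsub, hlam, -, hsing⟩ := hF
  obtain ⟨m, hmI, hm⟩ := exists_min_image I r (card_pos.mp (by omega))
  have hmI' : {m} ⊂ I :=
    ssubset_of_subset_of_ne (singleton_subset_iff.mpr hmI) (by rintro rfl; simp at hI2)
  obtain ⟨C, hC, hCmax⟩ := exists_max_image (F.filter fun C => C ⊂ I ∧ m ∈ C) card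
    ⟨{m}, mem_filter.mpr ⟨hsing m ((hsub I hI).1 hmI), hmI', mem_singleton_self m⟩⟩
  obtain ⟨hCF, hCI, hmC⟩ := mem_filter.mp hC
  obtain ⟨x, hx, hxmin⟩ := exists_min_image (I \ C) r (sdiff_nonempty.mpr hCI.not_subset)
  obtain ⟨hxI, hxC⟩ := mem_sdiff.mp hx
  have hmx : r m < r x :=
    (hm x hxI).lt_of_ne fun h => hxC (hr h ▸ hmC)
  refine ⟨x, hxI, ⟨m, hmI, hmx⟩, fun J hJ hxJ ⟨y, hyJ, hyx⟩ => ?_⟩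
  rcases hlam I hI J hJ with hIJ | hIJ | hJI
  · simpa [hIJ] using mem_inter.mpr ⟨hxI, hxJ⟩
  · exact hIJ
  obtain rfl | hJI := hJI.eq_or_ssubset
  · exact subset_rfl
  exfalso
  rcases hlam J hJ C hCF with hJC | hJC | hCJ
  · have hyC : y ∉ C := fun hyC => by simpa [hJC] using mem_inter.mpr ⟨hyJ, hyC⟩
    exact (hxmin y (mem_sdiff.mpr ⟨hJI.subset hyJ, hyC⟩)).not_gt hyx
  · exact hxC (hJC hxJ)
  · have hJC : J.card ≤ C.card := hCmax J (mem_filter.mpr ⟨hJ, hJI, hCJ hmC⟩)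
    exact hxC (eq_of_subset_of_card_le hCJ hJC ▸ hxJ)

lemma IsHierarchy.card_filter_two_le_card_le (hF : IsHierarchy S F) :
    (F.filter fun I => 2 ≤ I.card).card ≤ S.card - 1 := by
  -- any injection into a linear order serves as a ranking of the points
  let r : α → Cardinal := embeddingToCardinal
  have hr : Injective r := embeddingToCardinal.injective
  obtain ⟨m, hmS, hm⟩ := exists_min_image S r (hF.1 S hF.2.2.1).2
  have : Nonempty α := ⟨m⟩
  choose! x hx using fun I (hI : I ∈ F.filter fun I => 2 ≤ I.card) =>
    hF.exists_isLeastClusterAbove hr (mem_filter.mp hI).1 (mem_filter.mp hI).2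
  calc (F.filter fun I => 2 ≤ I.card).card ≤ (S.erase m).card := by
        refine card_le_card_of_injOn x (fun I hI => ?_) fun I hI J hJ hIJ => ?_
        · obtain ⟨hxI, ⟨y, hyI, hyx⟩, -⟩ := hx I hI
          have hIS := (hF.1 I (mem_filter.mp hI).1).1
          exact mem_erase.mpr ⟨by rintro hxm; exact (hm y (hIS hyI)).not_gt (hxm ▸ hyx),
            hIS hxI⟩
        · have hxJ := hIJ ▸ hx J hJ
          exact ((hx I hI).subset_of_mem J (mem_filter.mp hJ).1 hxJ.mem hxJ.exists_lt).antisymm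
            (hxJ.subset_of_mem I (mem_filter.mp hI).1 (hx I hI).mem (hx I hI).exists_lt)
    _ = S.card - 1 := card_erase_of_mem hmS

lemma IsHierarchy.card_nontrivialClusters_le (hF : IsHierarchy S F) :
    (nontrivialClusters S F).card ≤ S.card - 2 := by
  have hsub : nontrivialClusters S F ⊆ (F.filter fun I => 2 ≤ I.card).erase S := by
    intro I
    simp only [nontrivialClusters, mem_filter, mem_erase]
    tauto
  have hle := card_le_card hsub
  have hbig := hF.card_filter_two_le_card_le
  by_cases hS : S ∈ F.filter fun I => 2 ≤ I.card
  · rw [card_erase_of_mem hS] at hle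
    omega
  · have : S.card < 2 := not_le.mp fun h => hS (mem_filter.mpr ⟨hF.2.2.1, h⟩)
    rw [erase_eq_of_notMem hS] at hle
    omega

lemma IsHierarchy.mem_nontrivialClusters_of_not_compatible (hF : IsHierarchy S F)
    {I J : Finset α} (hI : I ∈ F) (hJS : J ⊆ S) (h : ¬ Compatible I J) :
    I ∈ nontrivialClusters S F := by
  refine mem_filter.mpr ⟨hI, ?_, by rintro rfl; exact h (Or.inr (Or.inr hJS))⟩
  by_contra! hI2
  have hI1 : I.card = 1 := by have := (hF.1 I hI).2.card_pos; omega
  obtain ⟨x, rfl⟩ := card_eq_one.mp hI1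
  exact h (compatible_singleton_left x J)

lemma dCM_le_card_mul (hF : IsHierarchy S F) (hG : IsHierarchy S G) :
    dCM F G ≤ (nontrivialClusters S F).card * (nontrivialClusters S G).card := by
  rw [← card_product]
  refine card_le_card fun p hp => ?_
  obtain ⟨hpFG, hp⟩ := mem_filter.mp hp
  obtain ⟨hI, hJ⟩ := mem_product.mp hpFG
  exact mem_product.mpr ⟨hF.mem_nontrivialClusters_of_not_compatible hI (hG.1 _ hJ).1 hp,
    hG.mem_nontrivialClusters_of_not_compatible hJ (hF.1 _ hI).1 fun h => hp h.symm⟩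

lemma IsHierarchy.dCM_le (hF : IsHierarchy S F) (hG : IsHierarchy S G) :
    dCM F G ≤ (S.card - 2) ^ 2 :=
  calc dCM F G ≤ (nontrivialClusters S F).card * (nontrivialClusters S G).card :=
        dCM_le_card_mul hF hG
    _ ≤ (S.card - 2) * (S.card - 2) :=
        Nat.mul_le_mul hF.card_nontrivialClusters_le hG.card_nontrivialClusters_le
    _ = (S.card - 2) ^ 2 := (sq _).symm

end UpperBound

section Caterpillar

variable {n : ℕ} {e : Fin n → α}

noncomputable def caterpillar (e : Fin n → α) : Finset (Finset α) :=
  univ.image (fun k => (Iic k).image e) ∪ univ.image fun k => {e k}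

lemma mem_image_Iic_iff (he : Injective e) {j k : Fin n} : e j ∈ (Iic k).image e ↔ j ≤ k := by
  rw [he.mem_finset_image, mem_Iic]

lemma image_Iic_injective (he : Injective e) : Injective fun k => (Iic k).image e := by
  intro k l (hkl : (Iic k).image e = (Iic l).image e)
  have hk : e k ∈ (Iic l).image e := hkl ▸ (mem_image_Iic_iff he).mpr le_rfl
  have hl : e l ∈ (Iic k).image e := hkl ▸ (mem_image_Iic_iff he).mpr le_rfl
  exact ((mem_image_Iic_iff he).mp hk).antisymm ((mem_image_Iic_iff he).mp hl)

lemma image_Iic_mem_caterpillar (e : Fin n → α) (k : Fin n) :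
    (Iic k).image e ∈ caterpillar e :=
  mem_union_left _ (mem_image_of_mem _ (mem_univ k))

lemma isHierarchy_caterpillar (e : Fin (n + 1) → α) :
    IsHierarchy (univ.image e) (caterpillar e) := by
  refine ⟨?_, ?_, ?_, ?_⟩
  · simp only [caterpillar, mem_union, mem_image, mem_univ, true_and]
    rintro A (⟨k, rfl⟩ | ⟨k, rfl⟩)
    · exact ⟨image_subset_image (subset_univ _),
        ⟨e k, mem_image_of_mem e (mem_Iic.mpr le_rfl)⟩⟩
    · exact ⟨singleton_subset_iff.mpr (mem_image_of_mem e (mem_univ k)), singleton_nonempty _⟩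
  · simp only [caterpillar, mem_union, mem_image, mem_univ, true_and]
    rintro A (⟨k, rfl⟩ | ⟨k, rfl⟩) B (⟨l, rfl⟩ | ⟨l, rfl⟩)
    · rcases le_total k l with hkl | hlk
      · exact Or.inr (Or.inl (image_subset_image (Iic_subset_Iic.mpr hkl)))
      · exact Or.inr (Or.inr (image_subset_image (Iic_subset_Iic.mpr hlk)))
    · exact (compatible_singleton_left _ _).symm
    · exact compatible_singleton_left _ _
    · exact compatible_singleton_left _ _
  · simpa [← Fin.top_eq_last, Iic_top] using image_Iic_mem_caterpillar e (Fin.last n)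
  · simp only [caterpillar, mem_union, mem_image, mem_univ, true_and]
    rintro _ ⟨k, rfl⟩
    exact Or.inr ⟨k, rfl⟩

lemma card_caterpillar [NeZero n] (he : Injective e) : (caterpillar e).card = 2 * n - 1 := by
  have hinter : univ.image (fun k => (Iic k).image e) ∩ univ.image (fun k => {e k}) =
      {{e 0}} := by
    ext A
    simp only [mem_inter, mem_image, mem_univ, true_and, mem_singleton]
    constructor
    · rintro ⟨⟨k, rfl⟩, ⟨j, hj⟩⟩
      have hk : e k ∈ ({e j} : Finset α) := hj ▸ (mem_image_Iic_iff he).mpr le_rfl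
      have h0 : e 0 ∈ ({e j} : Finset α) := hj ▸ (mem_image_Iic_iff he).mpr (Fin.zero_le k)
      rw [mem_singleton] at hk h0
      rw [← hj, ← he h0]
    · rintro rfl
      have hIic : Iic (0 : Fin n) = {0} := by ext; simp
      exact ⟨⟨0, by rw [hIic, image_singleton]⟩, ⟨0, rfl⟩⟩
  rw [caterpillar, card_union, hinter, card_image_of_injective _ (image_Iic_injective he),
    card_image_of_injective (f := fun k => ({e k} : Finset α)) _ (singleton_injective.comp he),
    card_singleton, card_univ, Fintype.card_fin]
  omega

lemma nondeg_caterpillar {e : Fin (n + 1) → α} (he : Injective e) :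
    Nondeg (univ.image e) (caterpillar e) := by
  refine ⟨isHierarchy_caterpillar e, ?_⟩
  rw [card_caterpillar he, card_image_of_injective _ he, card_univ, Fintype.card_fin]

lemma not_compatible_image_Iic_neg {e : Fin (n + 2) → α} (he : Injective e)
    {a b : Fin (n + 2)} (ha : a ∈ Ioo 0 (Fin.last (n + 1)))
    (hb : b ∈ Ioo 0 (Fin.last (n + 1))) :
    ¬ Compatible ((Iic a).image e) ((Iic b).image fun i => e (-i)) := by
  have he' : Injective fun i : Fin (n + 2) => e (-i) := he.comp neg_injective
  have hlast : (-1 : Fin (n + 2)) = Fin.last (n + 1) := by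
    ext
    simp [Fin.val_neg', Nat.mod_eq_of_lt]
  obtain ⟨ha0, hal⟩ := mem_Ioo.mp ha
  obtain ⟨hb0, hbl⟩ := mem_Ioo.mp hb
  refine not_compatible_of_mem (x := e 0) (y := e 1) (z := e (-1)) ?_ ?_ ?_ ?_ ?_ ?_
  · exact (mem_image_Iic_iff he).mpr (Fin.zero_le a)
  · simpa using (mem_image_Iic_iff he' (j := 0)).mpr (Fin.zero_le b)
  · exact (mem_image_Iic_iff he).mpr (Fin.one_le_of_ne_zero ha0.ne')
  · have hb1 : ¬ -1 ≤ b := by rw [hlast]; exact not_le.mpr hbl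
    simpa using (mem_image_Iic_iff he' (j := -1)).not.mpr hb1
  · rw [hlast]
    exact (mem_image_Iic_iff he).not.mpr (not_le.mpr hal)
  · simpa using (mem_image_Iic_iff he' (j := 1)).mpr (Fin.one_le_of_ne_zero hb0.ne')

lemma le_dCM_caterpillar_neg {e : Fin (n + 2) → α} (he : Injective e) :
    n ^ 2 ≤ dCM (caterpillar e) (caterpillar fun i => e (-i)) := by
  have he' : Injective fun i : Fin (n + 2) => e (-i) := he.comp neg_injective
  have hIoo : (Ioo (0 : Fin (n + 2)) (Fin.last (n + 1))).card = n := by simp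
  calc n ^ 2 = (Ioo 0 (Fin.last (n + 1)) ×ˢ Ioo 0 (Fin.last (n + 1))).card := by
        rw [card_product, hIoo, sq]
    _ ≤ dCM (caterpillar e) (caterpillar fun i => e (-i)) := by
      refine card_le_card_of_injOn (fun p => ((Iic p.1).image e, (Iic p.2).image fun i => e (-i)))
        (fun p hp => ?_) fun p _ q _ hpq => ?_
      · obtain ⟨ha, hb⟩ := mem_product.mp hp
        exact mem_filter.mpr ⟨mem_product.mpr ⟨image_Iic_mem_caterpillar _ _,
          image_Iic_mem_caterpillar _ _⟩, not_compatible_image_Iic_neg he ha hb⟩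
      · obtain ⟨ha, hb⟩ := Prod.mk.inj hpq
        exact Prod.ext (image_Iic_injective he ha) (image_Iic_injective he' hb)

end Caterpillar

lemma exists_injective_image_univ_eq (S : Finset α) {n : ℕ} (hn : S.card = n) :
    ∃ e : Fin n → α, Injective e ∧ univ.image e = S := by
  subst hn
  refine ⟨fun i => S.equivFin.symm i, Subtype.val_injective.comp S.equivFin.symm.injective, ?_⟩
  ext x
  simp only [mem_image, mem_univ, true_and]
  exact ⟨by rintro ⟨i, rfl⟩; exact (S.equivFin.symm i).2,
    fun hx => ⟨S.equivFin ⟨x, hx⟩, by simp⟩⟩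

theorem dCM_diameter (S : Finset α) (hn : 2 ≤ S.card) :
    (∀ F G : Finset (Finset α), IsHierarchy S F → IsHierarchy S G →
      dCM F G ≤ (S.card - 2) ^ 2) ∧
    (∃ F G : Finset (Finset α), Nondeg S F ∧ Nondeg S G ∧
      dCM F G = (S.card - 2) ^ 2) := by
  refine ⟨fun F G hF hG => hF.dCM_le hG, ?_⟩
  obtain ⟨m, hm⟩ : ∃ m, S.card = m + 2 := ⟨S.card - 2, by omega⟩
  obtain ⟨e, he, rfl⟩ := exists_injective_image_univ_eq S hm
  have he' : Injective fun i : Fin (m + 2) => e (-i) := he.comp neg_injective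
  have himage : univ.image (fun i => e (-i)) = univ.image e := by
    rw [show (fun i => e (-i)) = e ∘ Neg.neg from rfl, ← image_image,
      image_univ_of_surjective neg_surjective]
  refine ⟨caterpillar e, caterpillar fun i => e (-i), nondeg_caterpillar he,
    himage ▸ nondeg_caterpillar he', ?_⟩
  refine le_antisymm ((isHierarchy_caterpillar e).dCM_le (himage ▸ isHierarchy_caterpillar _)) ?_
  simpa [hm] using le_dCM_caterpillar_neg he

end TreeDist
end

section
/- Let S be a finite set and let 𝒜, ℬ be two distinct nondegenerate hierarchies over S. Then 𝒜 and ℬ are NNI-adjacent (one is obtained from the other by a single NNI move) if and only if d_CM(𝒜,ℬ) = 1, i.e., if and only if there is exactly one pair (I,J) with I ∈ 𝒜 and J ∈ ℬ such that I and J are incompatible. -/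
/-!
A laminar family `F` of nonempty sets has at most `2 |⋃ F| - 1` members: split `F` at a maximal
member `N` into the members inside `N` and those disjoint from it, or remove `N` when it is the
top. Hence a nondegenerate hierarchy is a maximal laminar family, i.e. it already contains every
nonempty `A ⊆ S` compatible with all its clusters.

An NNI move at `C`, with parent `P` and grandparent `R`, trades `P` for `R \ C`, and the only
cluster of the old hierarchy crossing `R \ C` is `P`, since any such cluster lies strictly
between `C` and `R`. Conversely, let `(P, Q)` be the unique crossing pair. By maximality every
other cluster of either hierarchy belongs to the other one, and `P \ Q` and `P ∪ Q` belong to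
`F`. Then `P` is the parent of `P \ Q`, `P ∪ Q` is the parent of `P`, and
`(P ∪ Q) \ (P \ Q) = Q`, so the move at `P \ Q` turns `F` into `G`.
-/

open scoped Classical

namespace TreeDist

variable {α : Type*} [DecidableEq α]

open Finset

theorem compatible_iff {A B : Finset α} :
    Compatible A B ↔ Disjoint A B ∨ A ⊆ B ∨ B ⊆ A := by
  rw [Compatible, disjoint_iff_inter_eq_empty]

theorem compatible_comm {A B : Finset α} : Compatible A B ↔ Compatible B A := by
  rw [compatible_iff, compatible_iff, disjoint_comm]
  tauto

theorem not_compatible_iff {A B : Finset α} :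
    ¬ Compatible A B ↔ ¬ Disjoint A B ∧ ¬ A ⊆ B ∧ ¬ B ⊆ A := by
  rw [compatible_iff]
  tauto

theorem Compatible.sdiff {A P Q : Finset α} (hP : Compatible A P) (hQ : Compatible A Q)
    (h : ¬ (Q ⊂ A ∧ A ⊂ P)) : Compatible A (P \ Q) := by
  rw [compatible_iff] at *
  rcases hP with hAP | hAP | hPA
  · exact Or.inl (hAP.mono_right sdiff_subset)
  · rcases hQ with hAQ | hAQ | hQA
    · exact Or.inr (Or.inl (subset_sdiff.2 ⟨hAP, hAQ⟩))
    · exact Or.inl (disjoint_sdiff.mono_left hAQ)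
    · rcases hQA.eq_or_ssubset with rfl | hQA
      · exact Or.inl disjoint_sdiff
      rcases hAP.eq_or_ssubset with rfl | hAP
      · exact Or.inr (Or.inr sdiff_subset)
      exact absurd ⟨hQA, hAP⟩ h
  · exact Or.inr (Or.inr (sdiff_subset.trans hPA))

theorem Compatible.union {A P Q : Finset α} (hP : Compatible A P) (hQ : Compatible A Q)
    (hPQ : ¬ Disjoint P Q) : Compatible A (P ∪ Q) := by
  rw [compatible_iff] at *
  rcases hP with hAP | hAP | hPA
  · rcases hQ with hAQ | hAQ | hQA
    · exact Or.inl (disjoint_union_right.2 ⟨hAP, hAQ⟩)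
    · exact Or.inr (Or.inl (hAQ.trans subset_union_right))
    · exact absurd (hAP.mono_left hQA).symm hPQ
  · exact Or.inr (Or.inl (hAP.trans subset_union_left))
  · rcases hQ with hAQ | hAQ | hQA
    · exact absurd (hAQ.mono_left hPA) hPQ
    · exact Or.inr (Or.inl (hAQ.trans subset_union_right))
    · exact Or.inr (Or.inr (union_subset hPA hQA))

theorem not_compatible_sdiff_of_ssubset {C P R : Finset α} (hCP : C ⊂ P) (hPR : P ⊂ R)
    (hC : C.Nonempty) : ¬ Compatible P (R \ C) := by
  obtain ⟨y, hyP, hyC⟩ := exists_of_ssubset hCP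
  obtain ⟨z, hzR, hzP⟩ := exists_of_ssubset hPR
  obtain ⟨c, hc⟩ := hC
  refine not_compatible_iff.2 ⟨?_, ?_, ?_⟩
  · exact not_disjoint_iff.2 ⟨y, hyP, mem_sdiff.2 ⟨hPR.subset hyP, hyC⟩⟩
  · exact fun h => (mem_sdiff.1 (h (hCP.subset hc))).2 hc
  · exact fun h => hzP (h (mem_sdiff.2 ⟨hzR, fun hzC => hzP (hCP.subset hzC)⟩))

theorem Compatible.subset_of_sdiff_ssubset {A P Q : Finset α} (hP : Compatible A P)
    (hQ : Compatible A Q) (hPQ : ¬ Compatible P Q) (h : P \ Q ⊂ A) : P ⊆ A := by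
  obtain ⟨-, hnPQ, hnQP⟩ := not_compatible_iff.1 hPQ
  obtain ⟨x, hx⟩ := sdiff_nonempty.2 hnPQ
  rw [compatible_iff] at hP hQ
  rcases hP with hAP | hAP | hPA
  · exact absurd (mem_sdiff.1 hx).1 (disjoint_left.1 hAP (h.subset hx))
  · rcases hQ with hAQ | hAQ | hQA
    · exact absurd (subset_sdiff.2 ⟨hAP, hAQ⟩) h.not_subset
    · exact absurd (hAQ (h.subset hx)) (mem_sdiff.1 hx).2
    · exact absurd (hQA.trans hAP) hnQP
  · exact hPA

theorem Compatible.union_subset_of_subset {A P Q : Finset α} (hQ : Compatible A Q)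
    (hPA : P ⊆ A) (hPQ : ¬ Compatible P Q) : P ∪ Q ⊆ A := by
  obtain ⟨hmeet, hnPQ, -⟩ := not_compatible_iff.1 hPQ
  rcases compatible_iff.1 hQ with hAQ | hAQ | hQA
  · exact absurd (hAQ.mono_left hPA) hmeet
  · exact absurd (hPA.trans hAQ) hnPQ
  · exact union_subset hPA hQA

def IsLaminar (F : Finset (Finset α)) : Prop :=
  ∀ A ∈ F, ∀ B ∈ F, Compatible A B

theorem IsHierarchy.isLaminar {S : Finset α} {F : Finset (Finset α)} (hF : IsHierarchy S F) :
    IsLaminar F :=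
  hF.2.1

theorem IsLaminar.mono {F F' : Finset (Finset α)} (hF : IsLaminar F) (h : F' ⊆ F) :
    IsLaminar F' :=
  fun A hA B hB => hF A (h hA) B (h hB)

theorem IsLaminar.disjoint_of_maximal {F : Finset (Finset α)} {A N : Finset α}
    (hF : IsLaminar F) (hN : Maximal (· ∈ F) N) (hA : A ∈ F) (hAN : ¬ A ⊆ N) :
    Disjoint A N := by
  rcases compatible_iff.1 (hF A hA N hN.1) with h | h | h
  · exact h
  · exact absurd h hAN
  · exact absurd (hN.2 hA h) hAN

theorem IsLaminar.card_add_card_sup_filter_not_subset_le {F : Finset (Finset α)} {N : Finset α}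
    (hF : IsLaminar F) (hN : Maximal (· ∈ F) N) :
    N.card + ((F.filter (¬ · ⊆ N)).sup id).card ≤ (F.sup id).card := by
  have hdisj : Disjoint N ((F.filter (¬ · ⊆ N)).sup id) :=
    Finset.disjoint_sup_right.2 fun B hB =>
      (hF.disjoint_of_maximal hN (mem_filter.1 hB).1 (mem_filter.1 hB).2).symm
  rw [← card_union_of_disjoint hdisj]
  exact card_le_card (union_subset (le_sup (f := id) hN.1) (sup_mono (filter_subset _ _)))

/-- The second conjunct is what the induction needs after removing a top cluster. -/
theorem IsLaminar.card_bound {F : Finset (Finset α)} (hF : IsLaminar F)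
    (hne : ∀ A ∈ F, A.Nonempty) (hF₀ : F.Nonempty) :
    F.card + 1 ≤ 2 * (F.sup id).card ∧
      (F.sup id ∉ F → F.card + 2 ≤ 2 * (F.sup id).card) := by
  induction F using strongInduction with
  | H F ih =>
  have ih' (F' : Finset (Finset α)) (h : F' ⊂ F) (hF'₀ : F'.Nonempty) :=
    ih F' h (hF.mono h.subset) (fun A hA => hne A (h.subset hA)) hF'₀
  obtain ⟨N, hN⟩ := F.exists_maximal hF₀
  by_cases hNU : N = F.sup id
  · subst hNU
    refine ⟨?_, fun h => absurd hN.1 h⟩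
    have hcard := card_erase_add_one hN.1
    have hU := card_pos.2 (hne _ hN.1)
    rcases (F.erase (F.sup id)).eq_empty_or_nonempty with hF' | hF'
    · rw [hF', card_empty] at hcard
      omega
    obtain ⟨h₁, h₂⟩ := ih' _ (erase_ssubset hN.1) hF'
    rcases (sup_mono (f := id) (erase_subset (F.sup id) F)).eq_or_ssubset with heq | hlt
    · rw [heq] at h₂
      have := h₂ (notMem_erase _ _)
      omega
    · have := card_lt_card hlt
      omega
  · suffices F.card + 2 ≤ 2 * (F.sup id).card from ⟨by omega, fun _ => this⟩
    obtain ⟨A, hA, hAN⟩ : ∃ A ∈ F, ¬ A ⊆ N := by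
      by_contra! h
      exact hNU (le_antisymm (le_sup (f := id) hN.1) (Finset.sup_le h))
    have hcard := card_filter_add_card_filter_not (s := F) (· ⊆ N)
    obtain ⟨h₁, -⟩ := ih' (F.filter (· ⊆ N)) (filter_ssubset.2 ⟨A, hA, hAN⟩)
      ⟨N, mem_filter.2 ⟨hN.1, subset_rfl⟩⟩
    obtain ⟨h₂, -⟩ := ih' (F.filter (¬ · ⊆ N))
      (filter_ssubset.2 ⟨N, hN.1, not_not.2 subset_rfl⟩)
      ⟨A, mem_filter.2 ⟨hA, hAN⟩⟩
    have hsup₁ : (F.filter (· ⊆ N)).sup id ⊆ N :=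
      Finset.sup_le fun B hB => (mem_filter.1 hB).2
    have := card_le_card hsup₁
    have := hF.card_add_card_sup_filter_not_subset_le hN
    omega

theorem Nondeg.mem_of_forall_compatible {S : Finset α} {F : Finset (Finset α)}
    (hF : Nondeg S F) {A : Finset α} (hAS : A ⊆ S) (hA : A.Nonempty)
    (hcomp : ∀ B ∈ F, Compatible B A) : A ∈ F := by
  by_contra hAF
  obtain ⟨⟨hsub, hlam, -, -⟩, hcard⟩ := hF
  have hlam' : IsLaminar (insert A F) := by
    intro B hB' C hC'
    rcases mem_insert.1 hB' with rfl | hB <;> rcases mem_insert.1 hC' with rfl | hC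
    · exact Or.inr (Or.inl subset_rfl)
    · exact compatible_comm.1 (hcomp C hC)
    · exact hcomp B hB
    · exact hlam B hB C hC
  have hne : ∀ B ∈ insert A F, B.Nonempty :=
    (forall_mem_insert _ _ _).2 ⟨hA, fun B hB => (hsub B hB).2⟩
  have hbound := (hlam'.card_bound hne (insert_nonempty _ _)).1
  have hunion : (insert A F).sup id ⊆ S :=
    Finset.sup_le ((forall_mem_insert _ _ _).2 ⟨hAS, fun B hB => (hsub B hB).1⟩)
  rw [card_insert_of_notMem hAF] at hbound
  have := card_le_card hunion
  omega

omit [DecidableEq α] in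
theorem IsParent.eq_of_ssubset_of_ssubset {F : Finset (Finset α)} {C P R I : Finset α}
    (hCP : IsParent F C P) (hPR : IsParent F P R) (hI : I ∈ F) (hCI : C ⊂ I) (hIR : I ⊂ R) :
    I = P := by
  by_contra hIP
  exact hIR.not_subset (hPR.2.2 I hI ((hCP.2.2 I hI hCI).ssubset_of_ne (Ne.symm hIP)))

theorem dCM_comm (F G : Finset (Finset α)) : dCM F G = dCM G F := by
  refine card_nbij' Prod.swap Prod.swap ?_ ?_ (fun _ _ => rfl) (fun _ _ => rfl) <;>
  · intro p hp
    simp only [mem_coe, mem_filter, mem_product, Prod.fst_swap, Prod.snd_swap] at hp ⊢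
    exact ⟨hp.1.symm, fun h => hp.2 (compatible_comm.1 h)⟩

theorem dCM_eq_one_iff {F G : Finset (Finset α)} :
    dCM F G = 1 ↔
    ∃ P ∈ F, ∃ Q ∈ G, ∀ I ∈ F, ∀ J ∈ G, ¬ Compatible I J ↔ I = P ∧ J = Q := by
  rw [dCM, card_eq_one]
  constructor
  · rintro ⟨⟨P, Q⟩, h⟩
    have hmem (I J : Finset α) :
        ((I ∈ F ∧ J ∈ G) ∧ ¬ Compatible I J) ↔ I = P ∧ J = Q := by
      simpa using Finset.ext_iff.1 h (I, J)
    obtain ⟨⟨hP, hQ⟩, -⟩ := (hmem P Q).2 ⟨rfl, rfl⟩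
    exact ⟨P, hP, Q, hQ, fun I hI J hJ => by simpa [hI, hJ] using hmem I J⟩
  · rintro ⟨P, hP, Q, hQ, h⟩
    refine ⟨(P, Q), ext fun ⟨I, J⟩ => ?_⟩
    simp only [mem_filter, mem_product, mem_singleton, Prod.mk.injEq]
    refine ⟨fun ⟨⟨hI, hJ⟩, hIJ⟩ => (h I hI J hJ).1 hIJ, ?_⟩
    rintro ⟨rfl, rfl⟩
    exact ⟨⟨hP, hQ⟩, (h I hP J hQ).2 ⟨rfl, rfl⟩⟩

theorem dCM_eq_one_of_isNNIMove {S : Finset α} {F G : Finset (Finset α)} (hF : IsHierarchy S F)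
    (h : IsNNIMove F G) : dCM F G = 1 := by
  obtain ⟨C, P, R, hC, hCP, hPR, rfl⟩ := h
  refine dCM_eq_one_iff.2
    ⟨P, hCP.1, R \ C, mem_insert_self _ _, fun I hI J hJ => ⟨?_, ?_⟩⟩
  · intro hIJ
    rcases mem_insert.1 hJ with rfl | hJ
    · obtain ⟨hCI, hIR⟩ := not_not.1 <|
        mt (Compatible.sdiff (hF.isLaminar I hI R hPR.1) (hF.isLaminar I hI C hC)) hIJ
      exact ⟨hCP.eq_of_ssubset_of_ssubset hPR hI hCI hIR, rfl⟩
    · exact absurd (hF.isLaminar I hI J (mem_of_mem_erase hJ)) hIJ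
  · rintro ⟨rfl, rfl⟩
    exact not_compatible_sdiff_of_ssubset hCP.2.1 hPR.2.1 (hF.1 C hC).2

theorem Nondeg.erase_subset_of_crossing_eq {S : Finset α} {F G : Finset (Finset α)}
    (hF : IsHierarchy S F) (hG : Nondeg S G) {P : Finset α}
    (hcross : ∀ I ∈ F, ∀ J ∈ G, ¬ Compatible I J → I = P) : F.erase P ⊆ G := by
  intro A hA
  obtain ⟨hAP, hA⟩ := mem_erase.1 hA
  refine hG.mem_of_forall_compatible (hF.1 A hA).1 (hF.1 A hA).2 fun B hB => ?_
  by_contra hBA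
  exact hAP (hcross A hA B hB fun h => hBA (compatible_comm.1 h))

theorem eq_insert_erase_of_unique_crossing {S : Finset α} {F G : Finset (Finset α)}
    (hF : Nondeg S F) (hG : Nondeg S G) {P Q : Finset α} (hP : P ∈ F) (hQ : Q ∈ G)
    (huniq : ∀ I ∈ F, ∀ J ∈ G, ¬ Compatible I J ↔ I = P ∧ J = Q) :
    G = insert Q (F.erase P) := by
  have hFG : F.erase P ⊆ G := hG.erase_subset_of_crossing_eq hF.1 fun I hI J hJ h =>
    ((huniq I hI J hJ).1 h).1
  have hGF : G.erase Q ⊆ F := hF.erase_subset_of_crossing_eq hG.1 fun J hJ I hI h =>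
    ((huniq I hI J hJ).1 fun h' => h (compatible_comm.1 h')).2
  have hPG : P ∉ G := fun h => (huniq P hP Q hQ).2 ⟨rfl, rfl⟩ (hG.1.isLaminar P h Q hQ)
  refine le_antisymm (fun J hJ => ?_) (insert_subset hQ hFG)
  rcases eq_or_ne J Q with rfl | hJQ
  · exact mem_insert_self _ _
  · exact mem_insert_of_mem
      (mem_erase.2 ⟨fun h => hPG (h ▸ hJ), hGF (mem_erase.2 ⟨hJQ, hJ⟩)⟩)

theorem isNNIMove_of_dCM_eq_one {S : Finset α} {F G : Finset (Finset α)} (hF : Nondeg S F)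
    (hG : Nondeg S G) (h : dCM F G = 1) : IsNNIMove F G := by
  obtain ⟨P, hP, Q, hQ, huniq⟩ := dCM_eq_one_iff.1 h
  have hPQ : ¬ Compatible P Q := (huniq P hP Q hQ).2 ⟨rfl, rfl⟩
  have hcompat (A : Finset α) (hA : A ∈ F) (hAP : A ≠ P) : Compatible A P ∧ Compatible A Q :=
    ⟨hF.1.isLaminar A hA P hP, by by_contra h; exact hAP ((huniq A hA Q hQ).1 h).1⟩
  have hG_eq := eq_insert_erase_of_unique_crossing hF hG hP hQ huniq
  obtain ⟨hmeet, hnPQ, hnQP⟩ := not_compatible_iff.1 hPQ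
  have hsdiff : P \ Q ∈ F := by
    refine hF.mem_of_forall_compatible (sdiff_subset.trans (hF.1.1 P hP).1)
      (sdiff_nonempty.2 hnPQ) fun A hA => ?_
    rcases eq_or_ne A P with rfl | hAP
    · exact Or.inr (Or.inr sdiff_subset)
    · exact (hcompat A hA hAP).1.sdiff (hcompat A hA hAP).2 fun h =>
        hnQP (h.1.subset.trans h.2.subset)
  have hunion : P ∪ Q ∈ F := by
    refine hF.mem_of_forall_compatible (union_subset (hF.1.1 P hP).1 (hG.1.1 Q hQ).1)
      ((hF.1.1 P hP).2.mono subset_union_left) fun A hA => ?_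
    rcases eq_or_ne A P with rfl | hAP
    · exact Or.inr (Or.inl subset_union_left)
    · exact (hcompat A hA hAP).1.union (hcompat A hA hAP).2 hmeet
  refine ⟨P \ Q, P, P ∪ Q, hsdiff, ⟨hP, ?_, ?_⟩, ⟨hunion, ?_, ?_⟩, ?_⟩
  · exact sdiff_lt_left.2 fun h => hmeet h.symm
  · intro A hA hA'
    rcases eq_or_ne A P with rfl | hAP
    · exact subset_rfl
    · exact (hcompat A hA hAP).1.subset_of_sdiff_ssubset (hcompat A hA hAP).2 hPQ hA'
  · exact left_lt_sup.2 hnQP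
  · exact fun A hA hPA => (hcompat A hA hPA.ne').2.union_subset_of_subset hPA.subset hPQ
  · rwa [show (P ∪ Q) \ (P \ Q) = Q by grind]

theorem nni_adjacent_iff_dCM_eq_one_general (S : Finset α) (F G : Finset (Finset α))
    (hF : Nondeg S F) (hG : Nondeg S G) :
    (IsNNIMove F G ∨ IsNNIMove G F) ↔ dCM F G = 1 := by
  refine ⟨?_, fun h => Or.inl (isNNIMove_of_dCM_eq_one hF hG h)⟩
  rintro (h | h)
  · exact dCM_eq_one_of_isNNIMove hF.1 h
  · rw [dCM_comm]
    exact dCM_eq_one_of_isNNIMove hG.1 h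

theorem nni_adjacent_iff_dCM_eq_one (S : Finset α) (F G : Finset (Finset α))
    (hF : Nondeg S F) (hG : Nondeg S G) (hne : F ≠ G) :
    (IsNNIMove F G ∨ IsNNIMove G F) ↔ dCM F G = 1 :=
  nni_adjacent_iff_dCM_eq_one_general S F G hF hG

end TreeDist
end
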